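/- arXiv:1706.06250 — 8 statements merged into one kernel-verified Lean document; each statement's English description precedes it below -/
import Mathlib

section
/- Let 0 < a < b and let f, g : [a,b] → ℝ be Lebesgue integrable. If (y·f(x) − x·f(y))·(x·g(y) − y·g(x)) ≤ 0 for all x, y ∈ [a,b], then ((b³ − a³)/3)·∫_a^b f(x)g(x) dx ≥ (∫_a^b x·f(x) dx)·(∫_a^b x·g(x) dx). -/
/-!
Integrating the pointwise condition first in `y` and then in `x` expands the double integral of
`(p y f x - p x f y)(p x g y - p y g x)` into `2 ((∫ p f)(∫ p g) - (∫ p²)(∫ f g))`, which is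
therefore nonpositive. The theorem is the case of the weight `p x = x`, with `∫ x² = (b³ - a³)/3`.
-/

open intervalIntegral

namespace PompeiuChebyshev

variable {a b : ℝ} {f g p : ℝ → ℝ}

lemma integral_const_mul_sub_sub_add {u₁ u₂ u₃ u₄ : ℝ → ℝ}
    (h₁ : IntervalIntegrable u₁ MeasureTheory.volume a b)
    (h₂ : IntervalIntegrable u₂ MeasureTheory.volume a b)
    (h₃ : IntervalIntegrable u₃ MeasureTheory.volume a b)
    (h₄ : IntervalIntegrable u₄ MeasureTheory.volume a b) (c₁ c₂ c₃ c₄ : ℝ) :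
    ∫ x in a..b, (c₁ * u₁ x - c₂ * u₂ x - c₃ * u₃ x + c₄ * u₄ x) =
      c₁ * (∫ x in a..b, u₁ x) - c₂ * (∫ x in a..b, u₂ x) - c₃ * (∫ x in a..b, u₃ x) +
        c₄ * ∫ x in a..b, u₄ x := by
  rw [integral_add (((h₁.const_mul c₁).sub (h₂.const_mul c₂)).sub (h₃.const_mul c₃))
      (h₄.const_mul c₄),
    integral_sub ((h₁.const_mul c₁).sub (h₂.const_mul c₂)) (h₃.const_mul c₃),
    integral_sub (h₁.const_mul c₁) (h₂.const_mul c₂),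
    integral_const_mul, integral_const_mul, integral_const_mul, integral_const_mul]

lemma integral_nonpos_of_forall_mem_Icc (hab : a ≤ b) (h : ∀ x ∈ Set.Icc a b, f x ≤ 0) :
    ∫ x in a..b, f x ≤ 0 := by
  simpa using integral_nonneg hab fun x hx => neg_nonneg.2 (h x hx)

lemma integral_kernel_eq (hpf : IntervalIntegrable (fun x => p x * f x) MeasureTheory.volume a b)
    (hpg : IntervalIntegrable (fun x => p x * g x) MeasureTheory.volume a b)
    (hpp : IntervalIntegrable (fun x => p x ^ 2) MeasureTheory.volume a b)
    (hfg : IntervalIntegrable (fun x => f x * g x) MeasureTheory.volume a b) (x : ℝ) :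
    ∫ y in a..b, (p y * f x - p x * f y) * (p x * g y - p y * g x) =
      f x * p x * (∫ y in a..b, p y * g y) - f x * g x * (∫ y in a..b, p y ^ 2) -
        p x ^ 2 * (∫ y in a..b, f y * g y) + g x * p x * ∫ y in a..b, p y * f y := by
  rw [← integral_const_mul_sub_sub_add hpg hpp hfg hpf]
  congr 1 with y
  ring

lemma integral_integral_kernel_eq
    (hpf : IntervalIntegrable (fun x => p x * f x) MeasureTheory.volume a b)
    (hpg : IntervalIntegrable (fun x => p x * g x) MeasureTheory.volume a b)
    (hpp : IntervalIntegrable (fun x => p x ^ 2) MeasureTheory.volume a b)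
    (hfg : IntervalIntegrable (fun x => f x * g x) MeasureTheory.volume a b) :
    ∫ x in a..b, ∫ y in a..b, (p y * f x - p x * f y) * (p x * g y - p y * g x) =
      2 * ((∫ x in a..b, p x * f x) * (∫ x in a..b, p x * g x) -
        (∫ x in a..b, p x ^ 2) * ∫ x in a..b, f x * g x) := by
  have hrearrange (x : ℝ) :
      f x * p x * (∫ y in a..b, p y * g y) - f x * g x * (∫ y in a..b, p y ^ 2) -
          p x ^ 2 * (∫ y in a..b, f y * g y) + g x * p x * (∫ y in a..b, p y * f y) =
        (∫ y in a..b, p y * g y) * (p x * f x) - (∫ y in a..b, p y ^ 2) * (f x * g x) -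
          (∫ y in a..b, f y * g y) * p x ^ 2 + (∫ y in a..b, p y * f y) * (p x * g x) := by
    ring
  simp_rw [integral_kernel_eq hpf hpg hpp hfg, hrearrange,
    integral_const_mul_sub_sub_add hpf hfg hpp hpg]
  ring

theorem integral_mul_integral_le_of_kernel_nonpos (hab : a ≤ b)
    (hpf : IntervalIntegrable (fun x => p x * f x) MeasureTheory.volume a b)
    (hpg : IntervalIntegrable (fun x => p x * g x) MeasureTheory.volume a b)
    (hpp : IntervalIntegrable (fun x => p x ^ 2) MeasureTheory.volume a b)
    (hfg : IntervalIntegrable (fun x => f x * g x) MeasureTheory.volume a b)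
    (hcond : ∀ x ∈ Set.Icc a b, ∀ y ∈ Set.Icc a b,
      (p y * f x - p x * f y) * (p x * g y - p y * g x) ≤ 0) :
    (∫ x in a..b, p x * f x) * (∫ x in a..b, p x * g x) ≤
      (∫ x in a..b, p x ^ 2) * ∫ x in a..b, f x * g x := by
  have hdouble := integral_nonpos_of_forall_mem_Icc hab fun x hx =>
    integral_nonpos_of_forall_mem_Icc hab (hcond x hx)
  rw [integral_integral_kernel_eq hpf hpg hpp hfg] at hdouble
  linarith

end PompeiuChebyshev

theorem positivity_pompeiu_chebyshev_general (a b : ℝ) (hab : a < b) (f g : ℝ → ℝ)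
    (hf : IntervalIntegrable f MeasureTheory.volume a b)
    (hg : IntervalIntegrable g MeasureTheory.volume a b)
    (hfg : IntervalIntegrable (fun x => f x * g x) MeasureTheory.volume a b)
    (hcond : ∀ x ∈ Set.Icc a b, ∀ y ∈ Set.Icc a b,
      (y * f x - x * f y) * (x * g y - y * g x) ≤ 0) :
    (b ^ 3 - a ^ 3) / 3 * ∫ x in a..b, f x * g x ≥
      (∫ x in a..b, x * f x) * ∫ x in a..b, x * g x := by
  have hsq : ∫ x in a..b, x ^ 2 = (b ^ 3 - a ^ 3) / 3 := by
    norm_num [integral_pow]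
  rw [ge_iff_le, ← hsq]
  exact PompeiuChebyshev.integral_mul_integral_le_of_kernel_nonpos (p := id) hab.le
    (hf.continuousOn_mul continuousOn_id) (hg.continuousOn_mul continuousOn_id)
    ((continuous_pow 2).intervalIntegrable a b) hfg hcond

theorem positivity_pompeiu_chebyshev (a b : ℝ) (ha : 0 < a) (hab : a < b) (f g : ℝ → ℝ)
    (hf : IntervalIntegrable f MeasureTheory.volume a b)
    (hg : IntervalIntegrable g MeasureTheory.volume a b)
    (hfg : IntervalIntegrable (fun x => f x * g x) MeasureTheory.volume a b)
    (hcond : ∀ x ∈ Set.Icc a b, ∀ y ∈ Set.Icc a b,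
      (y * f x - x * f y) * (x * g y - y * g x) ≤ 0) :
    (b ^ 3 - a ^ 3) / 3 * ∫ x in a..b, f x * g x ≥
      (∫ x in a..b, x * f x) * ∫ x in a..b, x * g x :=
  positivity_pompeiu_chebyshev_general a b hab f g hf hg hfg hcond
end

section
/- Let 0 < a < b and let f, g : [a,b] → ℝ be Lebesgue integrable. If (y·f(x) − x·f(y))·(x·g(y) − y·g(x)) ≥ 0 for all x, y ∈ [a,b], then ((b³ − a³)/3)·∫_a^b f(x)g(x) dx ≤ (∫_a^b x·f(x) dx)·(∫_a^b x·g(x) dx). -/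
/-!
With `A = ∫ p f`, `B = ∫ p g`, `C = ∫ f g`, `K = ∫ p²`, integrating the nonnegative kernel
`(p y f x - p x f y) (p x g y - p y g x)` in `y` gives `p x f x B - f x g x K - p x² C + p x g x A`,
a nonnegative function of `x`; integrating that in `x` gives `2 (A B - K C) ≥ 0`. Iterated single
integrals suffice, so no product-measure integrability is needed. The theorem is the case
`p x = x` on `[a, b]`, where `K = (b³ - a³) / 3`.
-/

open MeasureTheory

section
variable {α : Type*} [MeasurableSpace α] {μ : Measure α} {p f g : α → ℝ}

theorem integral_cross_mul_eq (hpf : Integrable (fun y => p y * f y) μ)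
    (hpg : Integrable (fun y => p y * g y) μ) (hfg : Integrable (fun y => f y * g y) μ)
    (hp : Integrable (fun y => p y ^ 2) μ) (x : α) :
    ∫ y, (p y * f x - p x * f y) * (p x * g y - p y * g x) ∂μ =
      p x * f x * ∫ y, p y * g y ∂μ - f x * g x * ∫ y, p y ^ 2 ∂μ
        - p x ^ 2 * ∫ y, f y * g y ∂μ + p x * g x * ∫ y, p y * f y ∂μ := by
  have expand : (fun y => (p y * f x - p x * f y) * (p x * g y - p y * g x)) =
      fun y => p x * f x * (p y * g y) - f x * g x * p y ^ 2 - p x ^ 2 * (f y * g y)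
        + p x * g x * (p y * f y) := by
    funext y; ring
  rw [expand, integral_add, integral_sub, integral_sub, integral_const_mul, integral_const_mul,
    integral_const_mul, integral_const_mul]
  all_goals fun_prop

theorem integral_sq_mul_integral_mul_le_of_cross_nonneg (hpf : Integrable (fun y => p y * f y) μ)
    (hpg : Integrable (fun y => p y * g y) μ) (hfg : Integrable (fun y => f y * g y) μ)
    (hp : Integrable (fun y => p y ^ 2) μ)
    (h : ∀ᵐ x ∂μ, ∀ᵐ y ∂μ, 0 ≤ (p y * f x - p x * f y) * (p x * g y - p y * g x)) :
    (∫ y, p y ^ 2 ∂μ) * ∫ y, f y * g y ∂μ ≤ (∫ y, p y * f y ∂μ) * ∫ y, p y * g y ∂μ := by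
  set A := ∫ y, p y * f y ∂μ
  set B := ∫ y, p y * g y ∂μ
  set C := ∫ y, f y * g y ∂μ
  set K := ∫ y, p y ^ 2 ∂μ
  have hnonneg : 0 ≤ ∫ x, (p x * f x * B - f x * g x * K - p x ^ 2 * C + p x * g x * A) ∂μ := by
    refine integral_nonneg_of_ae ?_
    filter_upwards [h] with x hx
    rw [← integral_cross_mul_eq hpf hpg hfg hp x]
    exact integral_nonneg_of_ae hx
  have heq : ∫ x, (p x * f x * B - f x * g x * K - p x ^ 2 * C + p x * g x * A) ∂μ =
      2 * (A * B - K * C) := by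
    rw [integral_add, integral_sub, integral_sub, integral_mul_const, integral_mul_const,
      integral_mul_const, integral_mul_const]
    · ring
    all_goals fun_prop
  linarith
end

theorem negativity_pompeiu_chebyshev_general (a b : ℝ) (hab : a < b) (f g : ℝ → ℝ)
    (hf : IntervalIntegrable f MeasureTheory.volume a b)
    (hg : IntervalIntegrable g MeasureTheory.volume a b)
    (hfg : IntervalIntegrable (fun x => f x * g x) MeasureTheory.volume a b)
    (hcond : ∀ x ∈ Set.Icc a b, ∀ y ∈ Set.Icc a b,
      (y * f x - x * f y) * (x * g y - y * g x) ≥ 0) :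
    (b ^ 3 - a ^ 3) / 3 * ∫ x in a..b, f x * g x ≤
      (∫ x in a..b, x * f x) * ∫ x in a..b, x * g x := by
  have hsq : ∫ x in a..b, x ^ 2 = (b ^ 3 - a ^ 3) / 3 := by
    rw [integral_pow]; ring
  rw [← hsq]
  simp only [intervalIntegral.integral_of_le hab.le]
  refine integral_sq_mul_integral_mul_le_of_cross_nonneg (p := fun x => x) ?_ ?_ hfg.1 ?_ ?_
  · exact (hf.continuousOn_mul continuousOn_id).1
  · exact (hg.continuousOn_mul continuousOn_id).1
  · exact (intervalIntegral.intervalIntegrable_pow 2).1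
  · filter_upwards [ae_restrict_mem measurableSet_Ioc] with x hx
    filter_upwards [ae_restrict_mem measurableSet_Ioc] with y hy
    exact hcond x (Set.Ioc_subset_Icc_self hx) y (Set.Ioc_subset_Icc_self hy)

theorem negativity_pompeiu_chebyshev (a b : ℝ) (ha : 0 < a) (hab : a < b) (f g : ℝ → ℝ)
    (hf : IntervalIntegrable f MeasureTheory.volume a b)
    (hg : IntervalIntegrable g MeasureTheory.volume a b)
    (hfg : IntervalIntegrable (fun x => f x * g x) MeasureTheory.volume a b)
    (hcond : ∀ x ∈ Set.Icc a b, ∀ y ∈ Set.Icc a b,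
      (y * f x - x * f y) * (x * g y - y * g x) ≥ 0) :
    (b ^ 3 - a ^ 3) / 3 * ∫ x in a..b, f x * g x ≤
      (∫ x in a..b, x * f x) * ∫ x in a..b, x * g x :=
  negativity_pompeiu_chebyshev_general a b hab f g hf hg hfg hcond
end

section
/- Let 0 < a < b and let f, g : [a,b] → ℝ be Lebesgue integrable. Define P(f,g) = ((b³−a³)/3)·∫_a^b f(x)g(x) dx − (∫_a^b x f(x) dx)·(∫_a^b x g(x) dx). Then P(f,g) = (1/2)·∫_a^b ∫_a^b (t f(x) − x f(t))·(t g(x) − x g(t)) dt dx. -/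
/-!
Expanding the product `(t f(x) - x f(t)) (t g(x) - x g(t))` gives four separable terms, so the
double integral splits into products of single integrals. This is the continuous Lagrange identity
`∫∫ (u(t) F(x) - u(x) F(t)) (u(t) G(x) - u(x) G(t)) = 2 (∫ u² ∫ F G - ∫ u F ∫ u G)`,
applied with `u(t) = t` and `∫_a^b t² dt = (b³ - a³) / 3`.
-/

open MeasureTheory intervalIntegral

section LagrangeIdentity

variable {μ : Measure ℝ} {a b : ℝ} {u F G : ℝ → ℝ}
  (hu : IntervalIntegrable (fun t => u t ^ 2) μ a b)
  (huF : IntervalIntegrable (fun t => u t * F t) μ a b)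
  (huG : IntervalIntegrable (fun t => u t * G t) μ a b)
  (hFG : IntervalIntegrable (fun t => F t * G t) μ a b)
include hu huF huG hFG

theorem integral_lagrange_integrand (x : ℝ) :
    ∫ t in a..b, (u t * F x - u x * F t) * (u t * G x - u x * G t) ∂μ =
      F x * G x * (∫ t in a..b, u t ^ 2 ∂μ) - u x * F x * (∫ t in a..b, u t * G t ∂μ)
        - u x * G x * (∫ t in a..b, u t * F t ∂μ) + u x ^ 2 * ∫ t in a..b, F t * G t ∂μ := by
  have h₁ := hu.const_mul (F x * G x)
  have h₂ := huG.const_mul (u x * F x)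
  have h₃ := huF.const_mul (u x * G x)
  have h₄ := hFG.const_mul (u x ^ 2)
  calc ∫ t in a..b, (u t * F x - u x * F t) * (u t * G x - u x * G t) ∂μ
      = ∫ t in a..b, (F x * G x * u t ^ 2 - u x * F x * (u t * G t)
          - u x * G x * (u t * F t) + u x ^ 2 * (F t * G t)) ∂μ := by
        congr 1; ext t; ring
    _ = _ := by
        rw [integral_add ((h₁.sub h₂).sub h₃) h₄, integral_sub (h₁.sub h₂) h₃,
          integral_sub h₁ h₂]
        simp only [intervalIntegral.integral_const_mul]

theorem integral_integral_lagrange_identity :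
    ∫ x in a..b, ∫ t in a..b, (u t * F x - u x * F t) * (u t * G x - u x * G t) ∂μ ∂μ =
      2 * ((∫ t in a..b, u t ^ 2 ∂μ) * (∫ t in a..b, F t * G t ∂μ)
        - (∫ t in a..b, u t * F t ∂μ) * ∫ t in a..b, u t * G t ∂μ) := by
  set U := ∫ t in a..b, u t ^ 2 ∂μ
  set UF := ∫ t in a..b, u t * F t ∂μ
  set UG := ∫ t in a..b, u t * G t ∂μ
  set FG := ∫ t in a..b, F t * G t ∂μ
  have h₁ := hFG.mul_const U
  have h₂ := huF.mul_const UG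
  have h₃ := huG.mul_const UF
  have h₄ := hu.mul_const FG
  calc ∫ x in a..b, ∫ t in a..b, (u t * F x - u x * F t) * (u t * G x - u x * G t) ∂μ ∂μ
      = ∫ x in a..b, (F x * G x * U - u x * F x * UG - u x * G x * UF + u x ^ 2 * FG) ∂μ := by
        congr 1; ext x; exact integral_lagrange_integrand hu huF huG hFG x
    _ = FG * U - UF * UG - UG * UF + U * FG := by
        rw [integral_add ((h₁.sub h₂).sub h₃) h₄, integral_sub (h₁.sub h₂) h₃,
          integral_sub h₁ h₂]
        simp only [intervalIntegral.integral_mul_const]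
        rfl
    _ = 2 * (U * FG - UF * UG) := by ring

end LagrangeIdentity

theorem pompeiu_chebyshev_double_integral_repr_general (a b : ℝ)
    (f g : ℝ → ℝ)
    (hf : IntervalIntegrable f MeasureTheory.volume a b)
    (hg : IntervalIntegrable g MeasureTheory.volume a b)
    (hfg : IntervalIntegrable (fun x => f x * g x) MeasureTheory.volume a b) :
    (b ^ 3 - a ^ 3) / 3 * (∫ x in a..b, f x * g x) -
        (∫ x in a..b, x * f x) * ∫ x in a..b, x * g x =
      (1 / 2) * ∫ x in a..b, ∫ t in a..b,
        (t * f x - x * f t) * (t * g x - x * g t) := by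
  have hsq : ∫ t in a..b, t ^ 2 = (b ^ 3 - a ^ 3) / 3 := by
    rw [integral_pow]; ring
  rw [integral_integral_lagrange_identity (intervalIntegrable_pow 2)
    (hf.continuousOn_mul continuousOn_id) (hg.continuousOn_mul continuousOn_id) hfg, hsq]
  ring

theorem pompeiu_chebyshev_double_integral_repr (a b : ℝ) (ha : 0 < a) (hab : a < b)
    (f g : ℝ → ℝ)
    (hf : IntervalIntegrable f MeasureTheory.volume a b)
    (hg : IntervalIntegrable g MeasureTheory.volume a b)
    (hfg : IntervalIntegrable (fun x => f x * g x) MeasureTheory.volume a b) :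
    (b ^ 3 - a ^ 3) / 3 * (∫ x in a..b, f x * g x) -
        (∫ x in a..b, x * f x) * ∫ x in a..b, x * g x =
      (1 / 2) * ∫ x in a..b, ∫ t in a..b,
        (t * f x - x * f t) * (t * g x - x * g t) :=
  pompeiu_chebyshev_double_integral_repr_general a b f g hf hg hfg
end

section
/- Let 0 < a < b, and let f, g : [a,b] → ℝ be absolutely continuous with f' ∈ L^∞[a,b] and g' ∈ L^1[a,b]. Then |P(f,g)| ≤ (1/2)·(b²a − (a³+8b³)/9 + (2/3)b³·ln(b/a))·‖f − ℓf'‖_∞·‖g − ℓg'‖_1, where ℓ(t) = t and P(f,g) = ((b³−a³)/3)∫_a^b fg − (∫_a^b x f)(∫_a^b x g). -/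
/-!
Put `φ = f / ℓ`, so that `φ' = -(f - ℓf') / ℓ²` and `t f(x) - x f(t) = t x (φ(x) - φ(t))`.
Bounding `φ(x) - φ(t)` through `φ'` gives `|t f(x) - x f(t)| ≤ ‖f - ℓf'‖_∞ |x - t|` and
`|t g(x) - x g(t)| ≤ ‖g - ℓg'‖₁ max{x,t} / min{x,t}`. Expanding the product shows the
Korkine-type identity `∫∫ (t f(x) - x f(t)) (t g(x) - x g(t)) dt dx = 2 P(f, g)`,
so `|P(f, g)|` is at most `‖f - ℓf'‖_∞ ‖g - ℓg'‖₁ / 2` times the integral of the kernel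
`|x - t| max{x,t} / min{x,t}` over `[a, b]²`, which is computed in closed form.
-/

open Set MeasureTheory

lemma hasDerivAt_div_id {f : ℝ → ℝ} {f' s : ℝ} (hf : HasDerivAt f f' s) (hs : s ≠ 0) :
    HasDerivAt (fun s => f s / s) (-(f s - s * f') / s ^ 2) s :=
  (hf.div (hasDerivAt_id' s) hs).congr_deriv (by ring)

lemma abs_mul_sub_mul_eq {t x u v : ℝ} (ht : 0 < t) (hx : 0 < x) :
    |t * u - x * v| = t * x * |u / x - v / t| := by
  rw [← abs_of_pos (mul_pos ht hx), ← abs_mul]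
  congr 1
  field_simp

/-- `f'` is only known to be bounded, not integrable, so instead of integrating `(f / ℓ)'` we
fence `f / ℓ` by the barrier `M (1/t - 1/s)`. -/
lemma abs_div_sub_div_le_of_abs_sub_mul_deriv_le {f f' : ℝ → ℝ} {M t x : ℝ} (ht : 0 < t)
    (htx : t ≤ x) (hf : ∀ s ∈ Icc t x, HasDerivAt f (f' s) s)
    (hM : ∀ s ∈ Icc t x, |f s - s * f' s| ≤ M) :
    |f x / x - f t / t| ≤ M * (t⁻¹ - x⁻¹) := by
  have hpos : ∀ s ∈ Icc t x, 0 < s := fun s hs => ht.trans_le hs.1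
  have hderiv : ∀ s ∈ Icc t x,
      HasDerivAt (fun s => f s / s - f t / t) (-(f s - s * f' s) / s ^ 2) s :=
    fun s hs => (hasDerivAt_div_id (hf s hs) (hpos s hs).ne').sub_const _
  have hB : ∀ s ∈ Icc t x, HasDerivAt (fun s => M * (t⁻¹ - s⁻¹)) (M / s ^ 2) s := fun s hs =>
    (((hasDerivAt_inv (hpos s hs).ne').const_sub t⁻¹).const_mul M).congr_deriv (by ring)
  refine image_norm_le_of_norm_deriv_right_le_deriv_boundary'
    (fun s hs => (hderiv s hs).continuousAt.continuousWithinAt)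
    (fun s hs => (hderiv s (Ico_subset_Icc_self hs)).hasDerivWithinAt) (by simp)
    (fun s hs => (hB s hs).continuousAt.continuousWithinAt)
    (fun s hs => (hB s (Ico_subset_Icc_self hs)).hasDerivWithinAt) ?_ (right_mem_Icc.2 htx)
  intro s hs
  have hs0 := hpos s (Ico_subset_Icc_self hs)
  rw [Real.norm_eq_abs, abs_div, abs_neg, abs_of_pos (by positivity : 0 < s ^ 2)]
  exact div_le_div_of_nonneg_right (hM s (Ico_subset_Icc_self hs)) (by positivity)

lemma abs_mul_sub_mul_le_of_abs_sub_mul_deriv_le {f f' : ℝ → ℝ} {a b M t x : ℝ} (ha : 0 < a)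
    (hf : ∀ s ∈ Icc a b, HasDerivAt f (f' s) s) (hM : ∀ s ∈ Icc a b, |f s - s * f' s| ≤ M)
    (ht : t ∈ Icc a b) (hx : x ∈ Icc a b) :
    |t * f x - x * f t| ≤ M * |x - t| := by
  wlog htx : t ≤ x generalizing t x
  · rw [abs_sub_comm, abs_sub_comm x]
    exact this hx ht (le_of_not_ge htx)
  have ht0 : 0 < t := ha.trans_le ht.1
  have hx0 : 0 < x := ht0.trans_le htx
  have hsub : Icc t x ⊆ Icc a b := Icc_subset_Icc ht.1 hx.2
  have h := abs_div_sub_div_le_of_abs_sub_mul_deriv_le ht0 htx (fun s hs => hf s (hsub hs))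
    (fun s hs => hM s (hsub hs))
  calc |t * f x - x * f t| = t * x * |f x / x - f t / t| := abs_mul_sub_mul_eq ht0 hx0
    _ ≤ t * x * (M * (t⁻¹ - x⁻¹)) := by gcongr
    _ = M * |x - t| := by
        rw [abs_of_nonneg (sub_nonneg.2 htx)]
        field_simp

lemma bddAbove_abs_sub_mul_deriv {f f' : ℝ → ℝ} {a b : ℝ}
    (hf : ContinuousOn f (Icc a b)) (hf' : ∃ C, ∀ x ∈ Icc a b, |f' x| ≤ C) :
    BddAbove ((fun t => |f t - t * f' t|) '' Icc a b) := by
  obtain ⟨C, hC⟩ := hf'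
  obtain ⟨D, hD⟩ := isCompact_Icc.exists_bound_of_continuousOn hf
  refine ⟨D + max |a| |b| * C, ?_⟩
  rintro _ ⟨t, ht, rfl⟩
  calc |f t - t * f' t| ≤ |f t| + |t| * |f' t| := (abs_sub _ _).trans_eq (by rw [abs_mul])
    _ ≤ D + max |a| |b| * C :=
      add_le_add (hD t ht) (mul_le_mul (abs_le_max_abs_abs ht.1 ht.2) (hC t ht) (abs_nonneg _)
        ((abs_nonneg _).trans (le_max_left _ _)))

lemma intervalIntegrable_sub_mul_deriv {g g' : ℝ → ℝ} {a b : ℝ} (hab : a ≤ b)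
    (hg : ∀ s ∈ Icc a b, HasDerivAt g (g' s) s) (hg' : IntervalIntegrable g' volume a b) :
    IntervalIntegrable (fun s => g s - s * g' s) volume a b :=
  (ContinuousOn.intervalIntegrable_of_Icc hab
    fun s hs => (hg s hs).continuousAt.continuousWithinAt).sub
    (hg'.continuousOn_mul continuousOn_id)

lemma abs_div_sub_div_le_integral_abs_sub_mul_deriv {g g' : ℝ → ℝ} {t x : ℝ} (ht : 0 < t)
    (htx : t ≤ x) (hg : ∀ s ∈ Icc t x, HasDerivAt g (g' s) s)
    (hg' : IntervalIntegrable g' volume t x) :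
    |g x / x - g t / t| ≤ (∫ s in t..x, |g s - s * g' s|) / t ^ 2 := by
  have hpos : ∀ s ∈ Icc t x, 0 < s := fun s hs => ht.trans_le hs.1
  have hint := intervalIntegrable_sub_mul_deriv htx hg hg'
  have hFTC : ∫ s in t..x, -(g s - s * g' s) / s ^ 2 = g x / x - g t / t := by
    refine intervalIntegral.integral_eq_sub_of_hasDerivAt (f := fun s => g s / s)
      (fun s hs => ?_) ?_
    · rw [uIcc_of_le htx] at hs
      exact hasDerivAt_div_id (hg s hs) (hpos s hs).ne'
    · refine hint.neg.mul_continuousOn (g := fun s => (s ^ 2)⁻¹) (fun s hs => ?_)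
      rw [uIcc_of_le htx] at hs
      exact (continuousAt_id.pow 2).inv₀ (pow_ne_zero 2 (hpos s hs).ne') |>.continuousWithinAt
  rw [← hFTC, ← intervalIntegral.integral_div, ← Real.norm_eq_abs]
  refine intervalIntegral.norm_integral_le_of_norm_le htx (ae_of_all _ fun s hs => ?_)
    (hint.abs.div_const _)
  have hs0 : 0 < s := ht.trans hs.1
  rw [Real.norm_eq_abs, abs_div, abs_neg, abs_of_pos (by positivity : 0 < s ^ 2)]
  gcongr
  exact hs.1.le

lemma abs_mul_sub_mul_le_integral_abs_sub_mul_deriv {g g' : ℝ → ℝ} {a b t x : ℝ}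
    (ha : 0 < a) (hg : ∀ s ∈ Icc a b, HasDerivAt g (g' s) s)
    (hg' : IntervalIntegrable g' volume a b)
    (ht : t ∈ Icc a b) (hx : x ∈ Icc a b) :
    |t * g x - x * g t| ≤ max x t / min x t * ∫ s in a..b, |g s - s * g' s| := by
  wlog htx : t ≤ x generalizing t x
  · rw [abs_sub_comm, max_comm, min_comm]
    exact this hx ht (le_of_not_ge htx)
  have ht0 : 0 < t := ha.trans_le ht.1
  have hx0 : 0 < x := ht0.trans_le htx
  have hab : a ≤ b := ht.1.trans ht.2
  have hsub : Icc t x ⊆ Icc a b := Icc_subset_Icc ht.1 hx.2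
  have hg'tx : IntervalIntegrable g' volume t x :=
    hg'.mono_set (by rwa [uIcc_of_le hab, uIcc_of_le htx])
  have h := abs_div_sub_div_le_integral_abs_sub_mul_deriv ht0 htx (fun s hs => hg s (hsub hs)) hg'tx
  have hmono : ∫ s in t..x, |g s - s * g' s| ≤ ∫ s in a..b, |g s - s * g' s| :=
    intervalIntegral.integral_mono_interval ht.1 htx hx.2 (ae_of_all _ fun _ => abs_nonneg _)
      (intervalIntegrable_sub_mul_deriv hab hg hg').abs
  calc |t * g x - x * g t| = t * x * |g x / x - g t / t| := abs_mul_sub_mul_eq ht0 hx0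
    _ ≤ t * x * ((∫ s in a..b, |g s - s * g' s|) / t ^ 2) := by
        gcongr
        exact h.trans (by gcongr)
    _ = max x t / min x t * ∫ s in a..b, |g s - s * g' s| := by
        rw [max_eq_left htx, min_eq_right htx]
        field_simp

lemma continuousOn_abs_sub_mul_max_div_min {x : ℝ} (hx : 0 < x) :
    ContinuousOn (fun t => |x - t| * (max x t / min x t)) (Ioi 0) :=
  (by fun_prop : Continuous fun t => |x - t|).continuousOn.mul <|
    (continuous_const.max continuous_id).continuousOn.div
      (continuous_const.min continuous_id).continuousOn fun _ ht => (lt_min hx ht).ne'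

lemma integral_abs_sub_mul_max_div_min {a b x : ℝ} (ha : 0 < a) (hx : x ∈ Icc a b) :
    ∫ t in a..b, |x - t| * (max x t / min x t) =
      x ^ 2 * Real.log (x / a) - x * (x - a) + (b ^ 3 - x ^ 3) / (3 * x) - (b ^ 2 - x ^ 2) / 2 := by
  have hx0 : 0 < x := ha.trans_le hx.1
  have hcont : ContinuousOn (fun t => |x - t| * (max x t / min x t)) (Icc a b) :=
    (continuousOn_abs_sub_mul_max_div_min hx0).mono fun t ht => ha.trans_le ht.1
  have hleft : ∫ t in a..x, |x - t| * (max x t / min x t) =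
      x ^ 2 * Real.log (x / a) - x * (x - a) := by
    have hpos : ∀ t ∈ uIcc a x, 0 < t := fun t ht => ha.trans_le (uIcc_of_le hx.1 ▸ ht).1
    have hderiv : ∀ t ∈ uIcc a x,
        HasDerivAt (fun t => x ^ 2 * Real.log (t / a) - x * t) (x ^ 2 / t - x) t := fun t ht =>
      ((((hasDerivAt_id' t).div_const a).log (div_pos (hpos t ht) ha).ne').const_mul _ |>.sub
        ((hasDerivAt_id' t).const_mul x)).congr_deriv (by field_simp)
    have hint : IntervalIntegrable (fun t => x ^ 2 / t - x) volume a x :=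
      (continuousOn_const.div continuousOn_id fun t ht => (hpos t ht).ne').sub
        continuousOn_const |>.intervalIntegrable
    rw [intervalIntegral.integral_congr (g := fun t => x ^ 2 / t - x) fun t ht => ?_,
      intervalIntegral.integral_eq_sub_of_hasDerivAt hderiv hint]
    · rw [div_self ha.ne', Real.log_one]
      ring
    · rw [uIcc_of_le hx.1] at ht
      dsimp only
      rw [abs_of_nonneg (sub_nonneg.2 ht.2), max_eq_left ht.2, min_eq_right ht.2]
      field_simp [(ha.trans_le ht.1).ne']
  have hright : ∫ t in x..b, |x - t| * (max x t / min x t) =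
      (b ^ 3 - x ^ 3) / (3 * x) - (b ^ 2 - x ^ 2) / 2 := by
    rw [intervalIntegral.integral_congr (g := fun t => t ^ 2 / x - t) fun t ht => ?_]
    · simp only [intervalIntegral.integral_sub
        ((continuous_pow 2).intervalIntegrable _ _ |>.div_const _)
        intervalIntegral.intervalIntegrable_id, intervalIntegral.integral_div, integral_pow,
        integral_id]
      field_simp
      ring
    · rw [uIcc_of_le hx.2] at ht
      dsimp only
      rw [abs_of_nonpos (sub_nonpos.2 ht.1), max_eq_right ht.1, min_eq_left ht.1]
      field_simp
      ring
  rw [← intervalIntegral.integral_add_adjacent_intervals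
    ((hcont.mono (Icc_subset_Icc_right hx.2)).intervalIntegrable_of_Icc hx.1)
    ((hcont.mono (Icc_subset_Icc_left hx.1)).intervalIntegrable_of_Icc hx.2), hleft, hright]
  ring

lemma continuousOn_integral_abs_sub_mul_max_div_min {a b : ℝ} (ha : 0 < a) :
    ContinuousOn (fun x => ∫ t in a..b, |x - t| * (max x t / min x t)) (Icc a b) := by
  refine ContinuousOn.congr ?_ fun x hx => integral_abs_sub_mul_max_div_min ha hx
  have hne : ∀ x ∈ Icc a b, x ≠ 0 := fun x hx => (ha.trans_le hx.1).ne'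
  refine ContinuousOn.sub (ContinuousOn.add (ContinuousOn.sub ?_ (by fun_prop))
    ((by fun_prop : Continuous fun x : ℝ => b ^ 3 - x ^ 3).continuousOn.div (by fun_prop)
      fun x hx => mul_ne_zero three_ne_zero (hne x hx))) (by fun_prop)
  exact continuousOn_pow 2 |>.mul <| (continuousOn_id.div_const a).log
    fun x hx => div_ne_zero (hne x hx) ha.ne'

lemma integral_integral_abs_sub_mul_max_div_min {a b : ℝ} (ha : 0 < a) (hab : a ≤ b) :
    ∫ x in a..b, ∫ t in a..b, |x - t| * (max x t / min x t) =
      b ^ 2 * a - (a ^ 3 + 8 * b ^ 3) / 9 + (2 / 3) * b ^ 3 * Real.log (b / a) := by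
  have hderiv : ∀ x ∈ uIcc a b, HasDerivAt
      (fun x => (x ^ 3 / 3 + b ^ 3 / 3) * Real.log (x / a) - 7 / 18 * x ^ 3
        + a * x ^ 2 / 2 - b ^ 2 * x / 2)
      (∫ t in a..b, |x - t| * (max x t / min x t)) x := by
    intro x hx
    rw [uIcc_of_le hab] at hx
    have hlog := ((hasDerivAt_id' x).div_const a).log (div_pos (ha.trans_le hx.1) ha).ne'
    rw [integral_abs_sub_mul_max_div_min ha hx]
    refine ((((((hasDerivAt_pow 3 x).div_const 3).add_const (b ^ 3 / 3)).mul hlog).sub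
      ((hasDerivAt_pow 3 x).const_mul (7 / 18))).add
      (((hasDerivAt_pow 2 x).const_mul a).div_const 2) |>.sub
      (((hasDerivAt_id' x).const_mul (b ^ 2)).div_const 2)).congr_deriv ?_
    field_simp [(ha.trans_le hx.1).ne']
    ring
  rw [intervalIntegral.integral_eq_sub_of_hasDerivAt hderiv
    ((continuousOn_integral_abs_sub_mul_max_div_min ha).intervalIntegrable_of_Icc hab),
    div_self ha.ne', Real.log_one]
  ring

lemma integral_mul_sub_mul_mul_mul_sub_mul {f g : ℝ → ℝ} {a b : ℝ} (hab : a ≤ b)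
    (hf : ContinuousOn f (Icc a b)) (hg : ContinuousOn g (Icc a b)) (x : ℝ) :
    ∫ t in a..b, (t * f x - x * f t) * (t * g x - x * g t) =
      f x * g x * ((b ^ 3 - a ^ 3) / 3) - x * g x * (∫ t in a..b, t * f t)
        - x * f x * (∫ t in a..b, t * g t) + x ^ 2 * ∫ t in a..b, f t * g t := by
  have hIf : IntervalIntegrable (fun t => t * f t) volume a b :=
    (continuousOn_id.mul hf).intervalIntegrable_of_Icc hab
  have hIg : IntervalIntegrable (fun t => t * g t) volume a b :=
    (continuousOn_id.mul hg).intervalIntegrable_of_Icc hab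
  have hIfg : IntervalIntegrable (fun t => f t * g t) volume a b :=
    (hf.mul hg).intervalIntegrable_of_Icc hab
  have hI2 : IntervalIntegrable (fun t : ℝ => f x * g x * t ^ 2) volume a b :=
    (continuous_const.mul (continuous_pow 2)).intervalIntegrable _ _
  calc ∫ t in a..b, (t * f x - x * f t) * (t * g x - x * g t)
      = ∫ t in a..b, (f x * g x * t ^ 2 - x * g x * (t * f t) - x * f x * (t * g t)
          + x ^ 2 * (f t * g t)) :=
        intervalIntegral.integral_congr fun t _ => by ring
    _ = _ := by
        rw [intervalIntegral.integral_add (((hI2.sub (hIf.const_mul _)).sub (hIg.const_mul _)))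
            (hIfg.const_mul _),
          intervalIntegral.integral_sub (hI2.sub (hIf.const_mul _)) (hIg.const_mul _),
          intervalIntegral.integral_sub hI2 (hIf.const_mul _)]
        simp only [intervalIntegral.integral_const_mul, integral_pow]
        ring

lemma integral_integral_mul_sub_mul_mul_mul_sub_mul {f g : ℝ → ℝ} {a b : ℝ} (hab : a ≤ b)
    (hf : ContinuousOn f (Icc a b)) (hg : ContinuousOn g (Icc a b)) :
    ∫ x in a..b, ∫ t in a..b, (t * f x - x * f t) * (t * g x - x * g t) =
      2 * ((b ^ 3 - a ^ 3) / 3 * (∫ x in a..b, f x * g x) -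
        (∫ x in a..b, x * f x) * ∫ x in a..b, x * g x) := by
  have hIf : IntervalIntegrable (fun t => t * f t) volume a b :=
    (continuousOn_id.mul hf).intervalIntegrable_of_Icc hab
  have hIg : IntervalIntegrable (fun t => t * g t) volume a b :=
    (continuousOn_id.mul hg).intervalIntegrable_of_Icc hab
  have hIfg : IntervalIntegrable (fun t => f t * g t) volume a b :=
    (hf.mul hg).intervalIntegrable_of_Icc hab
  have hI2 : IntervalIntegrable (fun x : ℝ => x ^ 2) volume a b :=
    (continuous_pow 2).intervalIntegrable _ _
  simp only [integral_mul_sub_mul_mul_mul_sub_mul hab hf hg]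
  rw [intervalIntegral.integral_add (((hIfg.mul_const _).sub (hIg.mul_const _)).sub
      (hIf.mul_const _)) (hI2.mul_const _),
    intervalIntegral.integral_sub ((hIfg.mul_const _).sub (hIg.mul_const _)) (hIf.mul_const _),
    intervalIntegral.integral_sub (hIfg.mul_const _) (hIg.mul_const _)]
  simp only [intervalIntegral.integral_mul_const, integral_pow]
  ring

lemma abs_integral_mul_sub_mul_mul_mul_sub_mul_le {f f' g g' : ℝ → ℝ} {a b M x : ℝ}
    (ha : 0 < a) (hf : ∀ s ∈ Icc a b, HasDerivAt f (f' s) s)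
    (hM : ∀ s ∈ Icc a b, |f s - s * f' s| ≤ M)
    (hg : ∀ s ∈ Icc a b, HasDerivAt g (g' s) s) (hg' : IntervalIntegrable g' volume a b)
    (hx : x ∈ Icc a b) :
    |∫ t in a..b, (t * f x - x * f t) * (t * g x - x * g t)| ≤
      M * (∫ s in a..b, |g s - s * g' s|) * ∫ t in a..b, |x - t| * (max x t / min x t) := by
  have hab : a ≤ b := hx.1.trans hx.2
  rw [← intervalIntegral.integral_const_mul, ← Real.norm_eq_abs]
  refine intervalIntegral.norm_integral_le_of_norm_le hab (ae_of_all _ fun t ht => ?_)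
    ((continuousOn_const.mul ((continuousOn_abs_sub_mul_max_div_min (ha.trans_le hx.1)).mono
      fun t ht => ha.trans_le ht.1)).intervalIntegrable_of_Icc hab)
  replace ht : t ∈ Icc a b := Ioc_subset_Icc_self ht
  have hfx := abs_mul_sub_mul_le_of_abs_sub_mul_deriv_le ha hf hM ht hx
  calc ‖(t * f x - x * f t) * (t * g x - x * g t)‖
      = |t * f x - x * f t| * |t * g x - x * g t| := by rw [Real.norm_eq_abs, abs_mul]
    _ ≤ M * |x - t| * (max x t / min x t * ∫ s in a..b, |g s - s * g' s|) := by
        gcongr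
        · exact (abs_nonneg _).trans hfx
        · exact abs_mul_sub_mul_le_integral_abs_sub_mul_deriv ha hg hg' ht hx
    _ = M * (∫ s in a..b, |g s - s * g' s|) * (|x - t| * (max x t / min x t)) := by ring

theorem pompeiu_chebyshev_inf_one_bound (a b : ℝ) (ha : 0 < a) (hab : a < b)
    (f g f' g' : ℝ → ℝ)
    (hf : ∀ x ∈ Set.Icc a b, HasDerivAt f (f' x) x)
    (hg : ∀ x ∈ Set.Icc a b, HasDerivAt g (g' x) x)
    (hf' : ∃ C, ∀ x ∈ Set.Icc a b, |f' x| ≤ C)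
    (hg' : IntervalIntegrable g' MeasureTheory.volume a b) :
    |(b ^ 3 - a ^ 3) / 3 * (∫ x in a..b, f x * g x) -
        (∫ x in a..b, x * f x) * ∫ x in a..b, x * g x| ≤
      (1 / 2) * (b ^ 2 * a - (a ^ 3 + 8 * b ^ 3) / 9 + (2 / 3) * b ^ 3 * Real.log (b / a)) *
        sSup ((fun t => |f t - t * f' t|) '' Set.Icc a b) *
        ∫ t in a..b, |g t - t * g' t| := by
  have hfc : ContinuousOn f (Icc a b) := fun x hx => (hf x hx).continuousAt.continuousWithinAt
  have hgc : ContinuousOn g (Icc a b) := fun x hx => (hg x hx).continuousAt.continuousWithinAt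
  set M := sSup ((fun t => |f t - t * f' t|) '' Icc a b)
  set N := ∫ t in a..b, |g t - t * g' t|
  have hM : ∀ s ∈ Icc a b, |f s - s * f' s| ≤ M := fun s hs =>
    le_csSup (bddAbove_abs_sub_mul_deriv hfc hf') ⟨s, hs, rfl⟩
  have hkernel : IntervalIntegrable
      (fun x => M * N * ∫ t in a..b, |x - t| * (max x t / min x t)) volume a b :=
    ContinuousOn.intervalIntegrable_of_Icc hab.le <|
      continuousOn_const.mul (continuousOn_integral_abs_sub_mul_max_div_min ha)
  calc _ = ‖∫ x in a..b, ∫ t in a..b, (t * f x - x * f t) * (t * g x - x * g t)‖ / 2 := by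
        rw [integral_integral_mul_sub_mul_mul_mul_sub_mul hab.le hfc hgc, Real.norm_eq_abs,
          abs_mul, abs_two]
        ring
    _ ≤ (∫ x in a..b, M * N * ∫ t in a..b, |x - t| * (max x t / min x t)) / 2 := by
        gcongr
        exact intervalIntegral.norm_integral_le_of_norm_le hab.le (ae_of_all _ fun x hx =>
          abs_integral_mul_sub_mul_mul_mul_sub_mul_le ha hf hM hg hg' (Ioc_subset_Icc_self hx))
          hkernel
    _ = _ := by
        rw [intervalIntegral.integral_const_mul,
          integral_integral_abs_sub_mul_max_div_min ha hab.le]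
        ring
end

section
/- Let [a,b] be an interval, and let f, h : [a,b] → ℝ be differentiable with h(x) ≠ 0 and h'(x) ≠ 0 for all x ∈ [a,b]. Then for all distinct x₁, x₂ ∈ [a,b] with h(x₁) ≠ h(x₂), there exists ξ strictly between x₁ and x₂ such that (h(x₁)f(x₂) − h(x₂)f(x₁))/(h(x₁) − h(x₂)) = f(ξ) − (h(ξ)/h'(ξ))·f'(ξ). -/
/-!
Apply Cauchy's mean value theorem to `f / h` and `1 / h`: since
`(f / h)' = (f' h - f h') / h²` and `(1 / h)' = -h' / h²`, clearing the common factors `h²` and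
`h(x₁) h(x₂)` turns the Cauchy identity into the stated one.
-/

open Set

theorem exists_mem_Ioo_mul_sub_mul_div_sub_eq {f h : ℝ → ℝ} {a b : ℝ} (hab : a < b)
    (hfc : ContinuousOn f (Icc a b)) (hfd : DifferentiableOn ℝ f (Ioo a b))
    (hhc : ContinuousOn h (Icc a b)) (hhd : DifferentiableOn ℝ h (Ioo a b))
    (hh0 : ∀ x ∈ Icc a b, h x ≠ 0) (hh'0 : ∀ x ∈ Ioo a b, deriv h x ≠ 0) (hne : h a ≠ h b) :
    ∃ ξ ∈ Ioo a b, (h a * f b - h b * f a) / (h a - h b) = f ξ - h ξ / deriv h ξ * deriv f ξ := by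
  have hasDerivAt {g : ℝ → ℝ} (hg : DifferentiableOn ℝ g (Ioo a b)) {x : ℝ} (hx : x ∈ Ioo a b) :
      HasDerivAt g (deriv g x) x :=
    (hg.differentiableAt (isOpen_Ioo.mem_nhds hx)).hasDerivAt
  obtain ⟨ξ, hξ, hcauchy⟩ := exists_ratio_hasDerivAt_eq_ratio_slope (fun x => f x / h x)
    (fun x => (deriv f x * h x - f x * deriv h x) / h x ^ 2) hab (hfc.div hhc hh0)
    (fun x hx => (hasDerivAt hfd hx).div (hasDerivAt hhd hx) (hh0 x (Ioo_subset_Icc_self hx)))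
    (fun x => (h x)⁻¹) (fun x => -deriv h x / h x ^ 2) (hhc.inv₀ hh0)
    (fun x hx => (hasDerivAt hhd hx).inv (hh0 x (Ioo_subset_Icc_self hx)))
  refine ⟨ξ, hξ, ?_⟩
  have ha := hh0 a (left_mem_Icc.2 hab.le)
  have hb := hh0 b (right_mem_Icc.2 hab.le)
  have hξ0 := hh0 ξ (Ioo_subset_Icc_self hξ)
  have hξ'0 := hh'0 ξ hξ
  have hab' : h a - h b ≠ 0 := sub_ne_zero.2 hne
  field_simp at hcauchy ⊢
  linear_combination hcauchy

theorem boggio_mvt_general (a b : ℝ) (f h : ℝ → ℝ)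
    (hf : ∀ x ∈ Set.Icc a b, DifferentiableAt ℝ f x)
    (hh : ∀ x ∈ Set.Icc a b, DifferentiableAt ℝ h x)
    (hh0 : ∀ x ∈ Set.Icc a b, h x ≠ 0)
    (hh'0 : ∀ x ∈ Set.Icc a b, deriv h x ≠ 0)
    (x₁ x₂ : ℝ) (hx₁ : x₁ ∈ Set.Icc a b) (hx₂ : x₂ ∈ Set.Icc a b)
    (hne : x₁ ≠ x₂) (hhne : h x₁ ≠ h x₂) :
    ∃ ξ ∈ Set.Ioo (min x₁ x₂) (max x₁ x₂),
      (h x₁ * f x₂ - h x₂ * f x₁) / (h x₁ - h x₂) =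
        f ξ - (h ξ / deriv h ξ) * deriv f ξ := by
  wlog hlt : x₁ < x₂ generalizing x₁ x₂
  · obtain ⟨ξ, hξ, heq⟩ := this x₂ x₁ hx₂ hx₁ hne.symm hhne.symm (hne.lt_or_gt.resolve_left hlt)
    refine ⟨ξ, by rwa [min_comm, max_comm], ?_⟩
    rw [← heq, ← neg_div_neg_eq]
    congr 1 <;> ring
  have hsub : Icc x₁ x₂ ⊆ Icc a b := Icc_subset_Icc hx₁.1 hx₂.2
  rw [min_eq_left hlt.le, max_eq_right hlt.le]
  exact exists_mem_Ioo_mul_sub_mul_div_sub_eq hlt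
    (fun x hx => (hf x (hsub hx)).continuousAt.continuousWithinAt)
    (fun x hx => (hf x (hsub (Ioo_subset_Icc_self hx))).differentiableWithinAt)
    (fun x hx => (hh x (hsub hx)).continuousAt.continuousWithinAt)
    (fun x hx => (hh x (hsub (Ioo_subset_Icc_self hx))).differentiableWithinAt)
    (fun x hx => hh0 x (hsub hx)) (fun x hx => hh'0 x (hsub (Ioo_subset_Icc_self hx))) hhne

theorem boggio_mvt (a b : ℝ) (hab : a < b) (f h : ℝ → ℝ)
    (hf : ∀ x ∈ Set.Icc a b, DifferentiableAt ℝ f x)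
    (hh : ∀ x ∈ Set.Icc a b, DifferentiableAt ℝ h x)
    (hh0 : ∀ x ∈ Set.Icc a b, h x ≠ 0)
    (hh'0 : ∀ x ∈ Set.Icc a b, deriv h x ≠ 0)
    (x₁ x₂ : ℝ) (hx₁ : x₁ ∈ Set.Icc a b) (hx₂ : x₂ ∈ Set.Icc a b)
    (hne : x₁ ≠ x₂) (hhne : h x₁ ≠ h x₂) :
    ∃ ξ ∈ Set.Ioo (min x₁ x₂) (max x₁ x₂),
      (h x₁ * f x₂ - h x₂ * f x₁) / (h x₁ - h x₂) =
        f ξ - (h ξ / deriv h ξ) * deriv f ξ :=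
  boggio_mvt_general a b f h hf hh hh0 hh'0 x₁ x₂ hx₁ hx₂ hne hhne
end

section
/- Let a < b and let f, g, h : [a,b] → ℝ be integrable. Then ∫_a^b h²(x) dx · ∫_a^b f(t)g(t) dt − (∫_a^b f h)·(∫_a^b h g) = (1/2)·∫_a^b ∫_a^b (h(x)f(t) − h(t)f(x))·(h(x)g(t) − h(t)g(x)) dt dx. -/
/-!
Expanding `(h x f t - h t f x)(h x g t - h t g x)` gives four terms, each a product of a function
of `x` and a function of `t`, so the iterated integral is a sum of products of single integrals
(no Fubini is needed). Two of the products equal `(∫ h²)(∫ f g)` and the other two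
`-(∫ f h)(∫ h g)`, which accounts for the factor `1 / 2`.
-/

open MeasureTheory

section KorkineIdentity

variable {α : Type*} [MeasurableSpace α] {μ : Measure α} {f g h : α → ℝ}

theorem integral_mul_sub_mul_mul_mul_sub_mul_s12 (hfg : Integrable (fun t => f t * g t) μ)
    (hh2 : Integrable (fun t => h t ^ 2) μ) (hfh : Integrable (fun t => f t * h t) μ)
    (hhg : Integrable (fun t => h t * g t) μ) (u v w : ℝ) :
    ∫ t, (u * f t - h t * v) * (u * g t - h t * w) ∂μ =
      u ^ 2 * (∫ t, f t * g t ∂μ) - u * w * (∫ t, f t * h t ∂μ) -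
        u * v * (∫ t, h t * g t ∂μ) + v * w * ∫ t, h t ^ 2 ∂μ := by
  calc ∫ t, (u * f t - h t * v) * (u * g t - h t * w) ∂μ
      = ∫ t, (u ^ 2 * (f t * g t) - u * w * (f t * h t) - u * v * (h t * g t)
          + v * w * h t ^ 2) ∂μ := by
        congr 1; ext t; ring
    _ = _ := by
        rw [integral_add (by fun_prop) (by fun_prop), integral_sub (by fun_prop) (by fun_prop),
          integral_sub (by fun_prop) (by fun_prop), integral_const_mul, integral_const_mul,
          integral_const_mul, integral_const_mul]

theorem integral_integral_mul_sub_mul_mul_mul_sub_mul_s12 (hfg : Integrable (fun t => f t * g t) μ)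
    (hh2 : Integrable (fun t => h t ^ 2) μ) (hfh : Integrable (fun t => f t * h t) μ)
    (hhg : Integrable (fun t => h t * g t) μ) :
    (∫ x, h x ^ 2 ∂μ) * (∫ t, f t * g t ∂μ) - (∫ t, f t * h t ∂μ) * ∫ x, h x * g x ∂μ =
      (1 / 2) * ∫ x, ∫ t, (h x * f t - h t * f x) * (h x * g t - h t * g x) ∂μ ∂μ := by
  have hhf : Integrable (fun x => h x * f x) μ := by simpa only [mul_comm] using hfh
  simp_rw [integral_mul_sub_mul_mul_mul_sub_mul_s12 hfg hh2 hfh hhg]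
  rw [integral_add (by fun_prop) (by fun_prop), integral_sub (by fun_prop) (by fun_prop),
    integral_sub (by fun_prop) (by fun_prop), integral_mul_const, integral_mul_const,
    integral_mul_const, integral_mul_const]
  simp only [mul_comm (h _) (f _)]
  ring

end KorkineIdentity

theorem generalized_pompeiu_chebyshev_repr_general (a b : ℝ) (hab : a < b) (f g h : ℝ → ℝ)
    (hfg : IntervalIntegrable (fun x => f x * g x) MeasureTheory.volume a b)
    (hh2 : IntervalIntegrable (fun x => h x ^ 2) MeasureTheory.volume a b)
    (hfh : IntervalIntegrable (fun x => f x * h x) MeasureTheory.volume a b)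
    (hhg : IntervalIntegrable (fun x => h x * g x) MeasureTheory.volume a b) :
    (∫ x in a..b, h x ^ 2) * (∫ t in a..b, f t * g t) -
        (∫ t in a..b, f t * h t) * ∫ x in a..b, h x * g x =
      (1 / 2) * ∫ x in a..b, ∫ t in a..b,
        (h x * f t - h t * f x) * (h x * g t - h t * g x) := by
  simp only [intervalIntegral.integral_of_le hab.le]
  exact integral_integral_mul_sub_mul_mul_mul_sub_mul_s12 hfg.1 hh2.1 hfh.1 hhg.1

theorem generalized_pompeiu_chebyshev_repr (a b : ℝ) (hab : a < b) (f g h : ℝ → ℝ)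
    (hf : IntervalIntegrable f MeasureTheory.volume a b)
    (hg : IntervalIntegrable g MeasureTheory.volume a b)
    (hh : IntervalIntegrable h MeasureTheory.volume a b)
    (hfg : IntervalIntegrable (fun x => f x * g x) MeasureTheory.volume a b)
    (hh2 : IntervalIntegrable (fun x => h x ^ 2) MeasureTheory.volume a b)
    (hfh : IntervalIntegrable (fun x => f x * h x) MeasureTheory.volume a b)
    (hhg : IntervalIntegrable (fun x => h x * g x) MeasureTheory.volume a b) :
    (∫ x in a..b, h x ^ 2) * (∫ t in a..b, f t * g t) -
        (∫ t in a..b, f t * h t) * ∫ x in a..b, h x * g x =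
      (1 / 2) * ∫ x in a..b, ∫ t in a..b,
        (h x * f t - h t * f x) * (h x * g t - h t * g x) :=
  generalized_pompeiu_chebyshev_repr_general a b hab f g h hfg hh2 hfh hhg
end

section
/- Let a < b, let h : [a,b] → ℝ be nonnegative and integrable, and suppose there exist constants M ≥ m > 0 and N ≥ n > 0 with m·h(x) ≤ f(x) ≤ M·h(x) and n·h(x) ≤ g(x) ≤ N·h(x) for a.e. x ∈ [a,b]. Then |∫_a^b h² · ∫_a^b fg − (∫_a^b fh)(∫_a^b hg)| ≤ (1/4)·((M−m)/√(mM))·((N−n)/√(Nn))·|∫_a^b h f|·|∫_a^b h g|. -/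
/-!
In `L²(a, b)` the functional is `⟪h, h⟫⟪f, g⟫ - ⟪h, f⟫⟪h, g⟫`. Its square is at most the product of
its values at `(f, f)` and `(g, g)`, because the gap is `⟪h, h⟫` times the Gram determinant of
`h, f, g` (pre-Grüss). The pointwise bounds give `⟪M h - f, f - m h⟫ ≥ 0`, i.e. Cassels'
`⟪f, f⟫ + m M ⟪h, h⟫ ≤ (M + m)⟪h, f⟫`, and AM-GM on the left-hand side turns this into
`⟪h, h⟫⟪f, f⟫ - ⟪h, f⟫² ≤ (M - m)² / (4 m M) ⟪h, f⟫²` (Barnett–Dragomir); likewise for `g`.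
-/

open MeasureTheory
open scoped RealInnerProductSpace

section InnerProductSpace

variable {E : Type*} [NormedAddCommGroup E] [InnerProductSpace ℝ E]

def pompeiuChebyshev (h f g : E) : ℝ := ⟪h, h⟫ * ⟪f, g⟫ - ⟪h, f⟫ * ⟪h, g⟫

theorem pompeiuChebyshev_self_nonneg (h f : E) : 0 ≤ pompeiuChebyshev h f f := by
  have := real_inner_mul_inner_self_le h f
  unfold pompeiuChebyshev
  linarith

theorem sq_pompeiuChebyshev_le (h f g : E) :
    pompeiuChebyshev h f g ^ 2 ≤ pompeiuChebyshev h f f * pompeiuChebyshev h g g := by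
  have hdet := (Matrix.posSemidef_gram ℝ ![h, f, g]).det_nonneg
  simp only [Matrix.det_fin_three, Matrix.gram_apply, Matrix.cons_val_zero, Matrix.cons_val_one,
    Matrix.cons_val] at hdet
  rw [real_inner_comm h f, real_inner_comm h g, real_inner_comm f g] at hdet
  unfold pompeiuChebyshev
  nlinarith [mul_nonneg (real_inner_self_nonneg (x := h)) hdet]

theorem pompeiuChebyshev_self_le {h f : E} {m M : ℝ} (hm : 0 < m) (hM : 0 < M)
    (hf : 0 ≤ ⟪M • h - f, f - m • h⟫) :
    pompeiuChebyshev h f f ≤ (M - m) ^ 2 / (4 * m * M) * ⟪h, f⟫ ^ 2 := by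
  have cassels : ⟪f, f⟫ + m * M * ⟪h, h⟫ ≤ (M + m) * ⟪h, f⟫ := by
    simp only [inner_sub_left, inner_sub_right, real_inner_smul_left, real_inner_smul_right,
      real_inner_comm h f] at hf
    linarith
  have hsq : (⟪f, f⟫ + m * M * ⟪h, h⟫) ^ 2 ≤ ((M + m) * ⟪h, f⟫) ^ 2 :=
    pow_le_pow_left₀ (add_nonneg real_inner_self_nonneg
      (mul_nonneg (by positivity) real_inner_self_nonneg)) cassels 2
  unfold pompeiuChebyshev
  rw [div_mul_eq_mul_div, le_div_iff₀ (by positivity)]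
  nlinarith [sq_nonneg (⟪f, f⟫ - m * M * ⟪h, h⟫)]

theorem abs_pompeiuChebyshev_le {h f g : E} {m M n N : ℝ} (hm : 0 < m) (hmM : m ≤ M)
    (hn : 0 < n) (hnN : n ≤ N) (hf : 0 ≤ ⟪M • h - f, f - m • h⟫)
    (hg : 0 ≤ ⟪N • h - g, g - n • h⟫) :
    |pompeiuChebyshev h f g| ≤
      1 / 4 * ((M - m) / √(m * M)) * ((N - n) / √(N * n)) * |⟪h, f⟫| * |⟪h, g⟫| := by
  have hM := hm.trans_le hmM
  have hN := hn.trans_le hnN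
  have hMm : 0 ≤ (M - m) / √(m * M) := div_nonneg (sub_nonneg.2 hmM) (Real.sqrt_nonneg _)
  have hNn : 0 ≤ (N - n) / √(N * n) := div_nonneg (sub_nonneg.2 hnN) (Real.sqrt_nonneg _)
  refine abs_le_of_sq_le_sq ?_ (by positivity)
  calc pompeiuChebyshev h f g ^ 2 ≤ pompeiuChebyshev h f f * pompeiuChebyshev h g g :=
        sq_pompeiuChebyshev_le h f g
    _ ≤ ((M - m) ^ 2 / (4 * m * M) * ⟪h, f⟫ ^ 2) * ((N - n) ^ 2 / (4 * n * N) * ⟪h, g⟫ ^ 2) :=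
        mul_le_mul (pompeiuChebyshev_self_le hm hM hf) (pompeiuChebyshev_self_le hn hN hg)
          (pompeiuChebyshev_self_nonneg h g) (by positivity)
    _ = _ := by
        simp only [mul_pow, div_pow, Real.sq_sqrt (by positivity : 0 ≤ m * M),
          Real.sq_sqrt (by positivity : 0 ≤ N * n), sq_abs]
        field_simp

end InnerProductSpace

namespace MeasureTheory

variable {α : Type*} [MeasurableSpace α] {μ : Measure α}

theorem MemLp.of_ae_mul_le_of_le_mul {h f : α → ℝ} {p : ENNReal} (hh : MemLp h p μ)
    (hf : AEStronglyMeasurable f μ) {m M : ℝ} (hb : ∀ᵐ x ∂μ, m * h x ≤ f x ∧ f x ≤ M * h x) :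
    MemLp f p μ := by
  refine hh.of_le_mul (c := max |m| |M|) hf ?_
  filter_upwards [hb] with x ⟨hmf, hfM⟩
  calc ‖f x‖ ≤ max |m * h x| |M * h x| := abs_le_max_abs_abs hmf hfM
    _ = max |m| |M| * ‖h x‖ := by
        rw [abs_mul, abs_mul, max_mul_of_nonneg _ _ (abs_nonneg _), Real.norm_eq_abs]

theorem L2.inner_toLp_real {f g : α → ℝ} (hf : MemLp f 2 μ) (hg : MemLp g 2 μ) :
    ⟪hf.toLp f, hg.toLp g⟫ = ∫ x, f x * g x ∂μ := by
  rw [L2.inner_def]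
  refine integral_congr_ae ?_
  filter_upwards [hf.coeFn_toLp, hg.coeFn_toLp] with x hfx hgx
  simp [hfx, hgx, mul_comm]

theorem L2.inner_sub_smul_toLp_nonneg {h f : α → ℝ} (hh : MemLp h 2 μ) (hf : MemLp f 2 μ)
    {m M : ℝ} (hb : ∀ᵐ x ∂μ, m * h x ≤ f x ∧ f x ≤ M * h x) :
    0 ≤ ⟪M • hh.toLp h - hf.toLp f, hf.toLp f - m • hh.toLp h⟫ := by
  rw [← MemLp.toLp_const_smul, ← MemLp.toLp_const_smul, ← MemLp.toLp_sub, ← MemLp.toLp_sub,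
    L2.inner_toLp_real]
  refine integral_nonneg_of_ae ?_
  filter_upwards [hb] with x ⟨hmf, hfM⟩
  simp only [Pi.sub_apply, Pi.smul_apply, smul_eq_mul, Pi.zero_apply]
  exact mul_nonneg (sub_nonneg.2 hfM) (sub_nonneg.2 hmf)

theorem Integrable.sq_of_ae_mul_le {h f : α → ℝ} (hh : AEStronglyMeasurable h μ) {m : ℝ}
    (hm : 0 < m) (h0 : ∀ᵐ x ∂μ, 0 ≤ h x) (hb : ∀ᵐ x ∂μ, m * h x ≤ f x)
    (hhf : Integrable (fun x => h x * f x) μ) : Integrable (fun x => h x ^ 2) μ := by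
  refine (hhf.const_mul m⁻¹).mono' (hh.pow 2) ?_
  filter_upwards [h0, hb] with x h0x hbx
  rw [Real.norm_of_nonneg (sq_nonneg _), le_inv_mul_iff₀ hm]
  nlinarith

end MeasureTheory

theorem reverse_cbs_pompeiu_chebyshev (a b : ℝ) (hab : a < b) (f g h : ℝ → ℝ)
    (hh0 : ∀ x ∈ Set.Icc a b, 0 ≤ h x)
    (hh : IntervalIntegrable h MeasureTheory.volume a b)
    (hf : Measurable f) (hg : Measurable g)
    (M m N n : ℝ) (hm : 0 < m) (hmM : m ≤ M) (hn : 0 < n) (hnN : n ≤ N)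
    (hfb : ∀ᵐ x ∂(MeasureTheory.volume.restrict (Set.Icc a b)),
      m * h x ≤ f x ∧ f x ≤ M * h x)
    (hgb : ∀ᵐ x ∂(MeasureTheory.volume.restrict (Set.Icc a b)),
      n * h x ≤ g x ∧ g x ≤ N * h x) :
    |(∫ x in a..b, h x ^ 2) * (∫ x in a..b, f x * g x) -
        (∫ x in a..b, f x * h x) * ∫ x in a..b, h x * g x| ≤
      (1 / 4) * ((M - m) / Real.sqrt (m * M)) * ((N - n) / Real.sqrt (N * n)) *
        |∫ x in a..b, h x * f x| * |∫ x in a..b, h x * g x| := by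
  have hIoc : Set.Ioc a b ⊆ Set.Icc a b := Set.Ioc_subset_Icc_self
  have hfb' := ae_restrict_of_ae_restrict_of_subset hIoc hfb
  have hgb' := ae_restrict_of_ae_restrict_of_subset hIoc hgb
  simp only [intervalIntegral.integral_of_le hab.le, mul_comm (f _) (h _)]
  set μ := volume.restrict (Set.Ioc a b)
  by_cases h2 : MemLp h 2 μ
  · have hf2 := h2.of_ae_mul_le_of_le_mul hf.aestronglyMeasurable hfb'
    have hg2 := h2.of_ae_mul_le_of_le_mul hg.aestronglyMeasurable hgb'
    have key := abs_pompeiuChebyshev_le hm hmM hn hnN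
      (L2.inner_sub_smul_toLp_nonneg h2 hf2 hfb') (L2.inner_sub_smul_toLp_nonneg h2 hg2 hgb')
    simpa only [pompeiuChebyshev, L2.inner_toLp_real, sq] using key
  -- otherwise neither `h ^ 2` nor `h * f` is integrable: their integrals are `0`, both sides vanish
  · have hhm : AEStronglyMeasurable h μ := hh.1.aestronglyMeasurable
    have hsq : ¬Integrable (fun x => h x ^ 2) μ := by
      rwa [← memLp_two_iff_integrable_sq hhm]
    have hh0' : ∀ᵐ x ∂μ, 0 ≤ h x :=
      (ae_restrict_iff' measurableSet_Ioc).2 (.of_forall fun x hx => hh0 x (hIoc hx))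
    have hhf : ¬Integrable (fun x => h x * f x) μ :=
      fun hi => hsq (hi.sq_of_ae_mul_le hhm hm hh0' (hfb'.mono fun _ => And.left))
    simp [integral_undef hsq, integral_undef hhf]
end

section
/- Let f : [a,b] → ℝ be differentiable with f(x) > 0 on [a,b] and f' integrable. If the functions f and 1/f are both f'-monotone in the same direction (i.e., (f'(x)f(t) − f'(t)f(x))·(f'(x)/f(t) − f'(t)/f(x)) ≥ 0 for all x,t ∈ [a,b]), then (b − a)·∫_a^b (f'(x))² dx ≥ ((f(b)² − f(a)²)/2)·(ln f(b) − ln f(a)); equivalently, ∫_a^b (f'(x))² dx ≥ (A(f(a),f(b))/L(f(a),f(b)))·(f(b) − f(a)), where A is the arithmetic mean and L the logarithmic mean. -/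
/-
With `φ = f' / f = (log f)'` and `ψ = f' f = (f² / 2)'`, the hypothesis says exactly that `φ` and
`ψ` are similarly ordered on `[a, b]`, and `φ ψ = f'²`; so the claim is Chebyshev's integral
inequality `∫ φ ∫ ψ ≤ (b - a) ∫ φ ψ`, obtained by integrating `(φ x - φ t) (ψ x - ψ t) ≥ 0`
over the square.

The subtle point is the integrability of `f'²`, which is not assumed. The hypothesis forces `f` to
be constant on every level set `{f' = y}` with `y ≠ 0`. If `f'` were unbounded above, Darboux's
theorem would put each large value `y` of `f'` arbitrarily close to one point `x₀`, so `f = f x₀`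
wherever `f'` is large; but just to the right of a point where `f'` is large, `f` exceeds `f x₀`,
and the mean value theorem past the last point of `{f = f x₀}` yields a point with large
derivative where `f ≠ f x₀`. Applied to `-f` this bounds `f'` below as well.
-/

open Set Filter Topology MeasureTheory

theorem eq_of_mul_sub_mul_mul_div_sub_div_nonneg {u p q : ℝ} (hu : u ≠ 0) (hp : 0 < p)
    (hq : 0 < q) (h : 0 ≤ (u * q - u * p) * (u / q - u / p)) : p = q := by
  have hexpand : (u * q - u * p) * (u / q - u / p) = -(u ^ 2 * (p - q) ^ 2) / (p * q) := by
    field_simp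
    ring
  rw [hexpand, div_nonneg_iff] at h
  have : u ^ 2 * (p - q) ^ 2 = 0 := by
    rcases h with h | h <;> nlinarith [mul_pos hp hq, sq_nonneg (p - q), sq_nonneg u]
  simpa [hu, sub_eq_zero] using this

theorem mul_sub_mul_mul_div_sub_div {u v p q : ℝ} (hp : p ≠ 0) (hq : q ≠ 0) :
    (u * q - v * p) * (u / q - v / p) = (u / p - v / q) * (u * p - v * q) := by
  field_simp

theorem IsCompact.exists_forall_not_bddAbove_image {X α : Type*} [TopologicalSpace X]
    [SemilatticeSup α] [Nonempty α] {K : Set X} {g : X → α} (hK : IsCompact K)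
    (hg : ¬BddAbove (g '' K)) : ∃ x ∈ K, ∀ t ∈ 𝓝[K] x, ¬BddAbove (g '' t) := by
  by_contra! hloc
  exact hg <| hK.induction_on (p := fun s => BddAbove (g '' s)) (by simp)
    (fun _ _ hst ht => ht.mono (image_mono hst))
    (fun _ _ hs ht => by rw [image_union]; exact hs.union ht) hloc

theorem exists_slope_le_deriv_and_ne_of_lt {f : ℝ → ℝ} {q z : ℝ} (hqz : q < z)
    (hf : ∀ x ∈ Icc q z, DifferentiableAt ℝ f x) (hfz : f q < f z) :
    ∃ ξ ∈ Ioo q z, slope f q z ≤ deriv f ξ ∧ f ξ ≠ f q := by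
  have hcont : ContinuousOn f (Icc q z) := fun x hx => (hf x hx).continuousAt.continuousWithinAt
  have hlevel : IsCompact (Icc q z ∩ f ⁻¹' {f q}) :=
    isCompact_Icc.of_isClosed_subset
      (hcont.preimage_isClosed_of_isClosed isClosed_Icc isClosed_singleton) inter_subset_left
  obtain ⟨α, ⟨⟨hqα, hαz⟩, hfα⟩, hαmax⟩ :=
    hlevel.exists_isGreatest ⟨q, left_mem_Icc.2 hqz.le, rfl⟩
  have hαz : α < z := hαz.lt_of_ne (by rintro rfl; exact hfz.ne' hfα)
  obtain ⟨ξ, hξ, hξ_deriv⟩ := exists_deriv_eq_slope f hαz (hcont.mono (Icc_subset_Icc_left hqα))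
    fun x hx => (hf x ⟨hqα.trans hx.1.le, hx.2.le⟩).differentiableWithinAt
  refine ⟨ξ, ⟨hqα.trans_lt hξ.1, hξ.2⟩, ?_, fun h => ?_⟩
  · rw [hξ_deriv, slope_def_field, show f α = f q from hfα]
    exact div_le_div_of_nonneg_left (sub_nonneg.2 hfz.le) (sub_pos.2 hαz) (by linarith)
  · exact hξ.1.not_ge (hαmax ⟨⟨hqα.trans hξ.1.le, hξ.2.le⟩, h⟩)

theorem deriv_le_of_forall_lt_deriv_imp_eq {f : ℝ → ℝ} {a b c Y : ℝ}
    (hf : ∀ x ∈ Icc a b, DifferentiableAt ℝ f x) (hY : 0 ≤ Y)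
    (hc : ∀ x ∈ Icc a b, Y < deriv f x → f x = c) {q : ℝ} (hq : q ∈ Ico a b) :
    deriv f q ≤ Y := by
  by_contra! hYq
  have hslope : Tendsto (slope f q) (𝓝[>] q) (𝓝 (deriv f q)) :=
    (hasDerivAt_iff_tendsto_slope.1 (hf q (Ico_subset_Icc_self hq)).hasDerivAt).mono_left
      (nhdsGT_le_nhdsNE q)
  obtain ⟨z, hYz, hz⟩ := ((hslope.eventually (lt_mem_nhds hYq)).and (Ioc_mem_nhdsGT hq.2)).exists
  have hfz : f q < f z := by
    rw [slope_def_field] at hYz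
    exact sub_pos.1 ((div_pos_iff_of_pos_right (sub_pos.2 hz.1)).1 (hY.trans_lt hYz))
  obtain ⟨ξ, hξ, hslope_le, hξ_ne⟩ := exists_slope_le_deriv_and_ne_of_lt hz.1
    (fun x hx => hf x ⟨hq.1.trans hx.1, hx.2.trans hz.2⟩) hfz
  have hξ_mem : ξ ∈ Icc a b := ⟨hq.1.trans hξ.1.le, hξ.2.le.trans hz.2⟩
  exact hξ_ne ((hc ξ hξ_mem (hYz.trans_le hslope_le)).trans
    (hc q (Ico_subset_Icc_self hq) hYq).symm)

theorem exists_mem_closure_deriv_eq_of_not_bddAbove {f : ℝ → ℝ} {a b : ℝ}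
    (hf : ∀ x ∈ Icc a b, DifferentiableAt ℝ f x) (hunb : ¬BddAbove (deriv f '' Icc a b)) :
    ∃ x₀ ∈ Icc a b, ∀ y, deriv f x₀ < y → x₀ ∈ closure {x ∈ Icc a b | deriv f x = y} := by
  obtain ⟨x₀, hx₀, hloc⟩ := isCompact_Icc.exists_forall_not_bddAbove_image hunb
  refine ⟨x₀, hx₀, fun y hy => Metric.mem_closure_iff.2 fun ε hε => ?_⟩
  obtain ⟨_, ⟨x, ⟨hx, hxε⟩, rfl⟩, hxy⟩ :=
    not_bddAbove_iff.1 (hloc _ (inter_mem_nhdsWithin _ (Metric.ball_mem_nhds x₀ hε))) y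
  have hsub : uIcc x₀ x ⊆ Icc a b := ordConnected_Icc.uIcc_subset hx₀ hx
  obtain ⟨p, hp, hpy⟩ := (ordConnected_uIcc.image_deriv fun t ht => hf t (hsub ht)).out
    (mem_image_of_mem _ left_mem_uIcc) (mem_image_of_mem _ right_mem_uIcc) ⟨hy.le, hxy.le⟩
  exact ⟨p, ⟨hsub hp, hpy⟩, (Real.dist_left_le_of_mem_uIcc hp).trans_lt
    (by rwa [dist_comm, ← Metric.mem_ball])⟩

theorem bddAbove_deriv_of_deriv_eq_imp_eq {f : ℝ → ℝ} {a b : ℝ}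
    (hf : ∀ x ∈ Icc a b, DifferentiableAt ℝ f x)
    (hlevel : ∀ x ∈ Icc a b, ∀ t ∈ Icc a b, deriv f x = deriv f t → deriv f x ≠ 0 → f x = f t) :
    BddAbove (deriv f '' Icc a b) := by
  by_contra hunb
  obtain ⟨x₀, hx₀, hclosure⟩ := exists_mem_closure_deriv_eq_of_not_bddAbove hf hunb
  set Y := max (max (deriv f x₀) (deriv f b)) 0
  have hc : ∀ x ∈ Icc a b, Y < deriv f x → f x = f x₀ := by
    intro x hx hYx
    have hmaps : MapsTo f {t ∈ Icc a b | deriv f t = deriv f x} {f x} := fun t ⟨ht, hteq⟩ =>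
      hlevel t ht x hx hteq (hteq ▸ ((le_max_right _ _).trans_lt hYx).ne')
    have := (hf x₀ hx₀).continuousAt.continuousWithinAt.mem_closure
      (hclosure _ ((le_max_left _ _).trans (le_max_left _ _) |>.trans_lt hYx)) hmaps
    rw [closure_singleton] at this
    exact this.symm
  refine hunb ⟨Y, ?_⟩
  rintro _ ⟨q, hq, rfl⟩
  rcases hq.2.eq_or_lt with rfl | hqb
  · exact (le_max_right _ _).trans (le_max_left _ _)
  · exact deriv_le_of_forall_lt_deriv_imp_eq hf (le_max_right _ _) hc ⟨hq.1, hqb⟩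

theorem isBounded_deriv_of_deriv_eq_imp_eq {f : ℝ → ℝ} {a b : ℝ}
    (hf : ∀ x ∈ Icc a b, DifferentiableAt ℝ f x)
    (hlevel : ∀ x ∈ Icc a b, ∀ t ∈ Icc a b, deriv f x = deriv f t → deriv f x ≠ 0 → f x = f t) :
    Bornology.IsBounded (deriv f '' Icc a b) := by
  have hneg := bddAbove_deriv_of_deriv_eq_imp_eq (f := -f) (fun x hx => (hf x hx).neg)
    (by simpa [deriv.neg'] using hlevel)
  rw [deriv.neg', ← image_image Neg.neg (deriv f), image_neg_eq_neg, bddAbove_neg] at hneg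
  exact isBounded_iff_bddBelow_bddAbove.2 ⟨hneg, bddAbove_deriv_of_deriv_eq_imp_eq hf hlevel⟩

theorem IntervalIntegrable.mul_of_forall_norm_le {f g : ℝ → ℝ} {a b C : ℝ}
    (hf : IntervalIntegrable f volume a b) (hg : AEStronglyMeasurable g)
    (hC : ∀ x ∈ uIcc a b, ‖g x‖ ≤ C) : IntervalIntegrable (fun x => f x * g x) volume a b :=
  (intervalIntegrable_iff.2 (hf.def'.mul_bdd hg.restrict
    (ae_restrict_of_forall_mem measurableSet_uIoc fun x hx => hC x (uIoc_subset_uIcc hx))))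

theorem integral_deriv_mul_self_eq {f : ℝ → ℝ} {a b : ℝ}
    (hf : ∀ x ∈ uIcc a b, DifferentiableAt ℝ f x)
    (hint : IntervalIntegrable (fun x => deriv f x * f x) volume a b) :
    ∫ x in a..b, deriv f x * f x = (f b ^ 2 - f a ^ 2) / 2 := by
  rw [intervalIntegral.integral_eq_sub_of_hasDerivAt (f := fun y => f y ^ 2 / 2)
    (fun x hx => (((hf x hx).hasDerivAt.pow 2).div_const 2).congr_deriv (by ring)) hint]
  ring

theorem integral_deriv_div_self_eq_log_sub {f : ℝ → ℝ} {a b : ℝ}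
    (hf : ∀ x ∈ uIcc a b, DifferentiableAt ℝ f x) (hne : ∀ x ∈ uIcc a b, f x ≠ 0)
    (hint : IntervalIntegrable (fun x => deriv f x / f x) volume a b) :
    ∫ x in a..b, deriv f x / f x = Real.log (f b) - Real.log (f a) :=
  intervalIntegral.integral_eq_sub_of_hasDerivAt
    (fun x hx => (hf x hx).hasDerivAt.log (hne x hx)) hint

theorem integral_mul_integral_le_of_similarly_ordered {φ ψ : ℝ → ℝ} {a b : ℝ} (hab : a ≤ b)
    (hφ : IntervalIntegrable φ volume a b) (hψ : IntervalIntegrable ψ volume a b)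
    (hφψ : IntervalIntegrable (fun x => φ x * ψ x) volume a b)
    (h : ∀ x ∈ Icc a b, ∀ t ∈ Icc a b, 0 ≤ (φ x - φ t) * (ψ x - ψ t)) :
    (∫ x in a..b, φ x) * (∫ x in a..b, ψ x) ≤ (b - a) * ∫ x in a..b, φ x * ψ x := by
  set Φ := ∫ x in a..b, φ x
  set Ψ := ∫ x in a..b, ψ x
  set P := ∫ x in a..b, φ x * ψ x
  have integral_comb (α β γ δ : ℝ) :
      ∫ x in a..b, (α * (φ x * ψ x) + β * φ x + γ * ψ x + δ) =
        α * P + β * Φ + γ * Ψ + (b - a) * δ := by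
    have h₁ := (hφψ.const_mul α).add (hφ.const_mul β)
    rw [intervalIntegral.integral_add (h₁.add (hψ.const_mul γ)) intervalIntegrable_const,
      intervalIntegral.integral_add h₁ (hψ.const_mul γ),
      intervalIntegral.integral_add (hφψ.const_mul α) (hφ.const_mul β),
      intervalIntegral.integral_const_mul, intervalIntegral.integral_const_mul,
      intervalIntegral.integral_const_mul, intervalIntegral.integral_const, smul_eq_mul]
  have inner (x : ℝ) (hx : x ∈ Icc a b) :
      0 ≤ (b - a) * (φ x * ψ x) + -Ψ * φ x + -Φ * ψ x + P :=
    calc 0 ≤ ∫ t in a..b, (φ x - φ t) * (ψ x - ψ t) :=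
          intervalIntegral.integral_nonneg hab (h x hx)
      _ = ∫ t in a..b, (1 * (φ t * ψ t) + -ψ x * φ t + -φ x * ψ t + φ x * ψ x) :=
          intervalIntegral.integral_congr fun t _ => by ring
      _ = _ := by rw [integral_comb]; ring
  have outer := integral_comb (b - a) (-Ψ) (-Φ) P ▸ intervalIntegral.integral_nonneg hab inner
  linarith

theorem deriv_sq_integral_mean_bound (a b : ℝ) (hab : a < b) (f : ℝ → ℝ)
    (hf : ∀ x ∈ Set.Icc a b, DifferentiableAt ℝ f x)
    (hfpos : ∀ x ∈ Set.Icc a b, 0 < f x)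
    (hf' : IntervalIntegrable (deriv f) MeasureTheory.volume a b)
    (hmono : ∀ x ∈ Set.Icc a b, ∀ t ∈ Set.Icc a b,
      0 ≤ (deriv f x * f t - deriv f t * f x) *
        (deriv f x / f t - deriv f t / f x)) :
    (b - a) * (∫ x in a..b, (deriv f x) ^ 2) ≥
      ((f b ^ 2 - f a ^ 2) / 2) * (Real.log (f b) - Real.log (f a)) := by
  have hIcc : uIcc a b = Icc a b := uIcc_of_le hab.le
  have hf₀ : ∀ x ∈ uIcc a b, DifferentiableAt ℝ f x := hIcc ▸ hf
  have hne : ∀ x ∈ uIcc a b, f x ≠ 0 := fun x hx => (hfpos x (hIcc ▸ hx)).ne'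
  have hcont : ContinuousOn f (uIcc a b) := fun x hx => (hf₀ x hx).continuousAt.continuousWithinAt
  obtain ⟨C, hC⟩ := isBounded_iff_forall_norm_le.1 <| isBounded_deriv_of_deriv_eq_imp_eq hf
    fun x hx t ht heq h0 => eq_of_mul_sub_mul_mul_div_sub_div_nonneg h0 (hfpos x hx) (hfpos t ht)
      (heq ▸ hmono x hx t ht)
  have hφ : IntervalIntegrable (fun x => deriv f x / f x) volume a b := by
    simpa only [div_eq_mul_inv, Pi.inv_apply] using hf'.mul_continuousOn (hcont.inv₀ hne)
  have hψ : IntervalIntegrable (fun x => deriv f x * f x) volume a b := hf'.mul_continuousOn hcont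
  have hφψ : IntervalIntegrable (fun x => deriv f x / f x * (deriv f x * f x)) volume a b := by
    have := (hf'.mul_of_forall_norm_le (measurable_deriv f).aestronglyMeasurable
      fun x hx => hC _ (mem_image_of_mem _ (hIcc ▸ hx))).mul_continuousOn (hcont.div hcont hne)
    convert this using 2 with x
    rw [Pi.div_apply]
    ring
  have hsq : ∫ x in a..b, deriv f x / f x * (deriv f x * f x) = ∫ x in a..b, deriv f x ^ 2 :=
    intervalIntegral.integral_congr fun x hx => by field_simp [hne x hx]
  have hcheb := integral_mul_integral_le_of_similarly_ordered hab.le hφ hψ hφψ fun x hx t ht => by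
    rw [← mul_sub_mul_mul_div_sub_div (hfpos x hx).ne' (hfpos t ht).ne']
    exact hmono x hx t ht
  rw [integral_deriv_div_self_eq_log_sub hf₀ hne hφ, integral_deriv_mul_self_eq hf₀ hψ, hsq]
    at hcheb
  linarith
end
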